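/- Let W be symmetric with α(W) > 0 and Q := U θ_{α(W)}(Λ) Uᵀ from its eigendecomposition. Then for every d ∈ [0,1]^n, Q² diag(d) W + W diag(d) Q² ⪯ 2α(W) Q², i.e., the Q-weighted Euclidean log-norm of diag(d)W is at most α(W). -/

import Mathlib

/-!
Put `s = √(1 - λ/a)` on the eigenvalues `λ ≤ a` of `W` and `S = U diag(s) Uᵀ`. Then `S` is
symmetric, `W = a(1 - S²)` and `Q = 2a(1 + S)`, and with `D = diag(d)`

  `2aQ² - (Q²DW + WDQ²) = 8a³ (1 + S)(1 - D + SDS)(1 + S)`,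

which is positive semidefinite because `0 ≤ D ≤ 1`.
-/

open Matrix

/-- θ_b(z) = 2b(1 + sqrt(1 - z/b)). -/
noncomputable def theta (b z : ℝ) : ℝ := 2 * b * (1 + Real.sqrt (1 - z / b))

theorem sandwich_factorization {R : Type*} [Ring R] (S D : R) :
    (1 + S) * (1 + S) + (1 + S) * (1 + S) -
        ((1 + S) * (1 + S) * D * (1 - S * S) + (1 - S * S) * D * ((1 + S) * (1 + S))) =
      (1 + S) * (1 - D + S * D * S) * (1 + S) + (1 + S) * (1 - D + S * D * S) * (1 + S) := by
  noncomm_ring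

theorem smul_sandwich_factorization {R : Type*} [Ring R] [Algebra ℝ R] (S D : R) (a : ℝ) :
    (2 * a) • ((2 * a) • (1 + S) * (2 * a) • (1 + S)) -
        ((2 * a) • (1 + S) * (2 * a) • (1 + S) * D * a • (1 - S * S) +
          a • (1 - S * S) * D * ((2 * a) • (1 + S) * (2 * a) • (1 + S))) =
      (8 * a ^ 3) • ((1 + S) * (1 - D + S * D * S) * (1 + S)) := by
  simp only [smul_mul_assoc, mul_smul_comm, smul_smul]
  linear_combination (norm := module) (4 * a ^ 3) • sandwich_factorization S D

variable {m : Type*} [DecidableEq m]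

theorem diag_le_of_posSemidef_smul_one_sub {A : Matrix m m ℝ} {a : ℝ}
    (h : (a • 1 - A).PosSemidef) (i : m) : A i i ≤ a := by
  simpa using h.diag_nonneg (i := i)

theorem diagonal_theta (l : m → ℝ) (a : ℝ) :
    diagonal (fun i => theta a (l i)) = (2 * a) • (1 + diagonal (fun i => √(1 - l i / a))) := by
  rw [← diagonal_one, diagonal_add, ← diagonal_smul]
  rfl

variable [Fintype m]

theorem posSemidef_one_sub_diagonal_add {S : Matrix m m ℝ} (hS : S.IsHermitian) {d : m → ℝ}
    (hd : ∀ i, d i ∈ Set.Icc (0 : ℝ) 1) :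
    (1 - diagonal d + S * diagonal d * S).PosSemidef := by
  have hcompl : (1 - diagonal d).PosSemidef := by
    rw [← diagonal_one, diagonal_sub]
    exact posSemidef_diagonal_iff.mpr fun i => sub_nonneg.mpr (hd i).2
  have hconj := (posSemidef_diagonal_iff.mpr fun i => (hd i).1).conjTranspose_mul_mul_same S
  rw [hS.eq] at hconj
  exact hcompl.add hconj

theorem posSemidef_lmi_of_eq {S Q W : Matrix m m ℝ} (hS : S.IsHermitian) {a : ℝ} (ha : 0 ≤ a)
    (hQ : Q = (2 * a) • (1 + S)) (hW : W = a • (1 - S * S)) {d : m → ℝ}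
    (hd : ∀ i, d i ∈ Set.Icc (0 : ℝ) 1) :
    ((2 * a) • (Q * Q) - (Q * Q * diagonal d * W + W * diagonal d * (Q * Q))).PosSemidef := by
  have hsandwich := (posSemidef_one_sub_diagonal_add hS hd).conjTranspose_mul_mul_same (1 + S)
  rw [conjTranspose_add, conjTranspose_one, hS.eq] at hsandwich
  rw [hQ, hW, smul_sandwich_factorization]
  exact hsandwich.smul (by positivity)

def orthogonalConj {U : Matrix m m ℝ} (hU1 : U * Uᵀ = 1) (hU2 : Uᵀ * U = 1) :
    Matrix m m ℝ ≃⋆ₐ[ℝ] Matrix m m ℝ :=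
  Unitary.conjStarAlgAut ℝ _ ⟨U, by
    rw [Unitary.mem_iff, star_eq_conjTranspose, conjTranspose_eq_transpose_of_trivial]
    exact ⟨hU2, hU1⟩⟩

theorem orthogonalConj_apply {U : Matrix m m ℝ} (hU1 : U * Uᵀ = 1) (hU2 : Uᵀ * U = 1)
    (M : Matrix m m ℝ) : orthogonalConj hU1 hU2 M = U * M * Uᵀ := by
  simp [orthogonalConj, star_eq_conjTranspose, conjTranspose_eq_transpose_of_trivial]

theorem orthogonalConj_symm_apply {U : Matrix m m ℝ} (hU1 : U * Uᵀ = 1) (hU2 : Uᵀ * U = 1)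
    (M : Matrix m m ℝ) : (orthogonalConj hU1 hU2).symm M = Uᵀ * M * U := by
  simp [orthogonalConj, star_eq_conjTranspose, conjTranspose_eq_transpose_of_trivial]

theorem posSemidef_smul_one_sub_of_conj {U Λ : Matrix m m ℝ} {a : ℝ}
    (hU1 : U * Uᵀ = 1) (hU2 : Uᵀ * U = 1) (h : (a • 1 - U * Λ * Uᵀ).PosSemidef) :
    (a • 1 - Λ).PosSemidef := by
  have hconj := h.conjTranspose_mul_mul_same U
  rw [conjTranspose_eq_transpose_of_trivial, ← orthogonalConj_apply hU1 hU2,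
    ← orthogonalConj_symm_apply hU1 hU2] at hconj
  simpa using hconj

theorem diagonal_eq_smul_one_sub_sqrt_mul_self {l : m → ℝ} {a : ℝ} (ha : 0 < a)
    (hl : ∀ i, l i ≤ a) :
    diagonal l =
      a • (1 - diagonal (fun i => √(1 - l i / a)) * diagonal (fun i => √(1 - l i / a))) := by
  rw [diagonal_mul_diagonal, ← diagonal_one, diagonal_sub, ← diagonal_smul]
  congr 1
  funext i
  have : l i / a ≤ 1 := (div_le_one ha).mpr (hl i)
  simp only [Pi.smul_apply, smul_eq_mul]
  rw [Real.mul_self_sqrt (by linarith)]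
  field_simp
  ring

theorem lognorm_bound_pos_case_general {n : ℕ}
    (W U Λ : Matrix (Fin n) (Fin n) ℝ) (a : ℝ)
    (hU1 : U * Uᵀ = 1) (hU2 : Uᵀ * U = 1)
    (hΛ : Λ.IsDiag) (hdecomp : W = U * Λ * Uᵀ)
    -- a = α(W) is the maximum eigenvalue of W, and it is positive
    (ha_ub : (a • (1 : Matrix (Fin n) (Fin n) ℝ) - W).PosSemidef)
    (ha_pos : 0 < a)
    (Q : Matrix (Fin n) (Fin n) ℝ)
    (hQ : Q = U * Matrix.diagonal (fun i => theta a (Λ i i)) * Uᵀ)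
    (d : Fin n → ℝ) (hd : ∀ i, d i ∈ Set.Icc (0:ℝ) 1) :
    ((2 * a) • (Q * Q) -
      (Q * Q * Matrix.diagonal d * W + W * Matrix.diagonal d * (Q * Q))).PosSemidef := by
  set s := fun i => √(1 - Λ i i / a)
  set S := U * diagonal s * Uᵀ
  have hΛa : ∀ i, Λ i i ≤ a :=
    diag_le_of_posSemidef_smul_one_sub (posSemidef_smul_one_sub_of_conj hU1 hU2 (hdecomp ▸ ha_ub))
  have hS : S.IsHermitian := by
    simpa [conjTranspose_eq_transpose_of_trivial] using
      isHermitian_mul_mul_conjTranspose U (isHermitian_diagonal s)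
  refine posSemidef_lmi_of_eq hS ha_pos.le ?_ ?_ hd
  · rw [hQ, diagonal_theta, ← orthogonalConj_apply hU1 hU2, map_smul, map_add, map_one,
      orthogonalConj_apply]
  · rw [hdecomp, ← hΛ.diagonal_diag,
      diagonal_eq_smul_one_sub_sqrt_mul_self ha_pos (l := Λ.diag) hΛa,
      ← orthogonalConj_apply hU1 hU2, map_smul, map_sub, map_one, map_mul, orthogonalConj_apply]
    rfl

theorem lognorm_bound_pos_case {n : ℕ}
    (W U Λ : Matrix (Fin n) (Fin n) ℝ) (a : ℝ)
    (hW : W.IsSymm)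
    (hU1 : U * Uᵀ = 1) (hU2 : Uᵀ * U = 1)
    (hΛ : Λ.IsDiag) (hdecomp : W = U * Λ * Uᵀ)
    -- a = α(W) is the maximum eigenvalue of W, and it is positive
    (ha_ub : (a • (1 : Matrix (Fin n) (Fin n) ℝ) - W).PosSemidef)
    (ha_eig : a ∈ spectrum ℝ W) (ha_pos : 0 < a)
    (Q : Matrix (Fin n) (Fin n) ℝ)
    (hQ : Q = U * Matrix.diagonal (fun i => theta a (Λ i i)) * Uᵀ)
    (d : Fin n → ℝ) (hd : ∀ i, d i ∈ Set.Icc (0:ℝ) 1) :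
    ((2 * a) • (Q * Q) -
      (Q * Q * Matrix.diagonal d * W + W * Matrix.diagonal d * (Q * Q))).PosSemidef :=
  lognorm_bound_pos_case_general W U Λ a hU1 hU2 hΛ hdecomp ha_ub ha_pos Q hQ d hd
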